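/- arXiv:2203.02614 — 2 statements merged into one kernel-verified Lean document; each statement's English description precedes it below -/
import Mathlib

section
/- The expected count of memory elements below any threshold is subadditive in time: for every x ∈ [0,1], the function f(ℓ) = E[s(x,ℓ)] satisfies f(p+q) ≤ f(p) + f(q) for all nonnegative integers p, q. -/
open MeasureTheory ProbabilityTheory Finset

noncomputable section

/-- One step of the forgetting process: the new point `x` joins `S`; if `x` is strictly
larger than the current minimum of `S`, that minimum is removed. -/
def forgetStep (S : Finset ℝ) (x : ℝ) : Finset ℝ :=
  if h : S.Nonempty then
    if S.min' h < x then insert x (S.erase (S.min' h)) else insert x S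
  else insert x S

/-- The memory after `n` steps, starting from the set `T`, with inputs `xs 0, xs 1, …`. -/
def forgetMem (T : Finset ℝ) (xs : ℕ → ℝ) : ℕ → Finset ℝ
  | 0 => T
  | n + 1 => forgetStep (forgetMem T xs n) (xs n)

/-- `sCount xs x ℓ` : number of elements of the memory lying in `[0, x]` after `ℓ` steps,
starting from `S = {0}`. -/
def sCount (xs : ℕ → ℝ) (x : ℝ) (ℓ : ℕ) : ℕ :=
  ((forgetMem {0} xs ℓ).filter (· ≤ x)).card

/-- The branching weight `W(z,n) = Σ_{x ∈ S(z,n)} 1/(1-x)`, the sum over memory elements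
strictly below `z` at time `n`. -/
def Wproc (xs : ℕ → ℝ) (z : ℝ) (n : ℕ) : ℝ :=
  ∑ x ∈ (forgetMem {0} xs n).filter (· < z), 1 / (1 - x)

/-- `Z(z,n) = Σ_{k=1}^n W(z,k)·1{W(z,k-1)=0}`. -/
def Zproc (xs : ℕ → ℝ) (z : ℝ) (n : ℕ) : ℝ :=
  ∑ k ∈ Finset.range n, if Wproc xs z k = 0 then Wproc xs z (k + 1) else 0

/-- `X(z,n) = W(z,n) - Z(z,n)`. -/
def Xproc (xs : ℕ → ℝ) (z : ℝ) (n : ℕ) : ℝ :=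
  Wproc xs z n - Zproc xs z n

/-- the minimum of the memory at time `n` (with junk value `0` if the memory were empty). -/
def mminProc (xs : ℕ → ℝ) (n : ℕ) : ℝ :=
  WithTop.untopD 0 (forgetMem {0} xs n).min

/-- the critical point `z₀ = 1 - 1/e`. -/
def critPoint : ℝ := 1 - (Real.exp 1)⁻¹

/-- The σ-algebra generated by the first `n` inputs `X 0, …, X (n-1)`. -/
def natSigma {Ω : Type*} [MeasurableSpace Ω] (X : ℕ → Ω → ℝ) (n : ℕ) : MeasurableSpace Ω :=
  ⨆ i ∈ Finset.range n, MeasurableSpace.comap (X i) inferInstance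

/-- The natural filtration `F_n = σ(x_1, …, x_n)` of the input sequence. -/
def natFilt {Ω : Type*} [m0 : MeasurableSpace Ω] (X : ℕ → Ω → ℝ)
    (hX : ∀ i, Measurable (X i)) : Filtration ℕ m0 where
  seq n := natSigma X n
  mono' n m hnm := biSup_mono fun i hi => Finset.mem_range.2 ((Finset.mem_range.1 hi).trans_le hnm)
  le' n := iSup₂_le fun i _ => measurable_iff_comap_le.1 (hX i)

/-- The input sequence is i.i.d. uniform on `[0,1]`. -/
def IsUnifIID {Ω : Type*} [MeasurableSpace Ω] (μ : Measure Ω) (X : ℕ → Ω → ℝ) : Prop :=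
  (∀ i, Measurable (X i)) ∧
    iIndepFun X μ ∧
    ∀ i, Measure.map (X i) μ = volume.restrict (Set.Icc (0 : ℝ) 1)

end

/-!
Pathwise, the memory after `p + q` steps is that of the process restarted at time `p` from the
memory `S_p`, driven by the shifted inputs. Run the same shifted inputs also from `{0}`: once the
first of them (almost surely positive) has been inserted, the second memory is contained in the
first, and afterwards the number of points `≤ x` in the first memory but not in the second never
grows, because whenever the two removed minima differ, the one removed from the first memory is
the smaller. So `s(x, p + q) ≤ s(x, p) + s'(x, q)`, where `s'` is computed from the shifted
inputs, and `s'(x, q)` has the law of `s(x, q)` because the shifted inputs are again i.i.d. uniform.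
-/

section Deterministic

variable {S A B T : Finset ℝ} {y : ℝ}

lemma forgetStep_of_lt (hS : S.Nonempty) (h : S.min' hS < y) :
    forgetStep S y = insert y (S.erase (S.min' hS)) := by
  simp [forgetStep, hS, h]

lemma forgetStep_of_le (hS : S.Nonempty) (h : y ≤ S.min' hS) : forgetStep S y = insert y S := by
  simp [forgetStep, hS, h.not_gt]

lemma mem_forgetStep_self (S : Finset ℝ) (y : ℝ) : y ∈ forgetStep S y := by
  unfold forgetStep; split_ifs <;> exact mem_insert_self _ _

lemma forgetStep_subset_insert (S : Finset ℝ) (y : ℝ) : forgetStep S y ⊆ insert y S := by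
  unfold forgetStep; split_ifs
  · exact insert_subset_insert _ (erase_subset _ _)
  all_goals exact Subset.rfl

lemma card_forgetMem_le (T : Finset ℝ) (xs : ℕ → ℝ) (n : ℕ) : #(forgetMem T xs n) ≤ #T + n := by
  induction n with
  | zero => simp [forgetMem]
  | succ n ih =>
    calc #(forgetMem T xs (n + 1)) ≤ #(insert (xs n) (forgetMem T xs n)) :=
          card_le_card (forgetStep_subset_insert _ _)
      _ ≤ #T + (n + 1) := by have := card_insert_le (xs n) (forgetMem T xs n); omega

lemma forgetMem_nonempty (hT : T.Nonempty) (xs : ℕ → ℝ) (n : ℕ) :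
    (forgetMem T xs n).Nonempty := by
  cases n with
  | zero => exact hT
  | succ n => exact ⟨_, mem_forgetStep_self _ _⟩

lemma forgetMem_add (T : Finset ℝ) (xs : ℕ → ℝ) (p k : ℕ) :
    forgetMem T xs (p + k) = forgetMem (forgetMem T xs p) (fun i => xs (p + i)) k := by
  induction k with
  | zero => rfl
  | succ k ih => rw [← add_assoc]; simp only [forgetMem, ih]

lemma min'_eq_min'_of_mem (hB : B.Nonempty) (hBA : B ⊆ A) (ha : A.min' (hB.mono hBA) ∈ B) :
    A.min' (hB.mono hBA) = B.min' hB :=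
  le_antisymm (min'_le _ _ (hBA (min'_mem B hB))) (min'_le _ _ ha)

lemma forgetStep_mono (hB : B.Nonempty) (hBA : B ⊆ A) (y : ℝ) :
    forgetStep B y ⊆ forgetStep A y := by
  have hA := hB.mono hBA
  have hab : A.min' hA ≤ B.min' hB := min'_le _ _ (hBA (min'_mem B hB))
  have hmin := min'_eq_min'_of_mem hB hBA
  rcases le_or_gt y (A.min' hA) with hya | hay
  · rw [forgetStep_of_le hB (hya.trans hab), forgetStep_of_le hA hya]
    exact insert_subset_insert _ hBA
  rw [forgetStep_of_lt hA hay]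
  rcases le_or_gt y (B.min' hB) with hyb | hby
  · rw [forgetStep_of_le hB hyb]
    refine insert_subset_insert _ (subset_erase.2 ⟨hBA, fun ha => ?_⟩)
    exact (hay.trans_le hyb).ne (hmin ha)
  · rw [forgetStep_of_lt hB hby]
    refine insert_subset_insert _ (subset_erase.2 ⟨(erase_subset _ _).trans hBA, fun ha => ?_⟩)
    exact ne_of_mem_erase ha (hmin (mem_of_mem_erase ha))

lemma card_filter_insert_erase_le {D : Finset ℝ} {a b : ℝ} (ha : a ∈ D) (hab : a ≤ b) (x : ℝ) :
    #{t ∈ insert b (D.erase a) | t ≤ x} ≤ #{t ∈ D | t ≤ x} := by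
  rw [filter_insert, filter_erase]
  split_ifs with hbx
  · have ha' : a ∈ {t ∈ D | t ≤ x} := mem_filter.2 ⟨ha, hab.trans hbx⟩
    calc #(insert b ({t ∈ D | t ≤ x}.erase a)) ≤ #({t ∈ D | t ≤ x}.erase a) + 1 :=
          card_insert_le _ _
      _ = #{t ∈ D | t ≤ x} := card_erase_add_one ha'
  · exact card_le_card (erase_subset _ _)

lemma card_filter_forgetStep_sdiff_le (hB : B.Nonempty) (hBA : B ⊆ A) (x y : ℝ) :
    #{t ∈ forgetStep A y \ forgetStep B y | t ≤ x} ≤ #{t ∈ A \ B | t ≤ x} := by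
  have hA := hB.mono hBA
  have hab : A.min' hA ≤ B.min' hB := min'_le _ _ (hBA (min'_mem B hB))
  have hmin := min'_eq_min'_of_mem hB hBA
  -- Only when both memories drop distinct minima does a new excess point (the minimum of `B`)
  -- appear, and then the smaller minimum of `A` leaves the excess.
  suffices h : forgetStep A y \ forgetStep B y ⊆ A \ B ∨
      (A.min' hA ∈ A \ B ∧
        forgetStep A y \ forgetStep B y ⊆ insert (B.min' hB) ((A \ B).erase (A.min' hA))) by
    rcases h with h | ⟨ha, h⟩
    · exact card_le_card (filter_subset_filter _ h)
    · exact (card_le_card (filter_subset_filter _ h)).trans (card_filter_insert_erase_le ha hab x)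
  rcases le_or_gt y (A.min' hA) with hya | hay
  · rw [forgetStep_of_le hB (hya.trans hab), forgetStep_of_le hA hya]
    left; grind
  rw [forgetStep_of_lt hA hay]
  rcases le_or_gt y (B.min' hB) with hyb | hby
  · rw [forgetStep_of_le hB hyb]
    left; grind
  rw [forgetStep_of_lt hB hby]
  by_cases haB : A.min' hA ∈ B
  · left; have := hmin haB; grind
  · right; exact ⟨mem_sdiff.2 ⟨min'_mem A hA, haB⟩, by grind⟩

lemma forgetMem_mono (hB : B.Nonempty) (hBA : B ⊆ A) (ys : ℕ → ℝ) (k : ℕ) :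
    forgetMem B ys k ⊆ forgetMem A ys k := by
  induction k with
  | zero => exact hBA
  | succ k ih => exact forgetStep_mono (forgetMem_nonempty hB ys k) ih _

lemma card_filter_forgetMem_sdiff_le (hB : B.Nonempty) (hBA : B ⊆ A) (ys : ℕ → ℝ) (x : ℝ)
    (k : ℕ) : #{t ∈ forgetMem A ys k \ forgetMem B ys k | t ≤ x} ≤ #{t ∈ A \ B | t ≤ x} := by
  induction k with
  | zero => exact le_rfl
  | succ k ih =>
    exact (card_filter_forgetStep_sdiff_le (forgetMem_nonempty hB ys k)
      (forgetMem_mono hB hBA ys k) x _).trans ih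

lemma card_filter_eq_add_card_filter_sdiff (hBA : B ⊆ A) (x : ℝ) :
    #{t ∈ A | t ≤ x} = #{t ∈ B | t ≤ x} + #{t ∈ A \ B | t ≤ x} := by
  rw [← card_sdiff_add_card_eq_card (filter_subset_filter _ hBA), add_comm]
  congr 2
  grind

lemma card_filter_forgetMem_le_add (T : Finset ℝ) {c : ℝ} (ys : ℕ → ℝ) (hc : c < ys 0) (x : ℝ)
    (q : ℕ) :
    #{t ∈ forgetMem T ys q | t ≤ x} ≤ #{t ∈ T | t ≤ x} + #{t ∈ forgetMem {c} ys q | t ≤ x} := by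
  cases q with
  | zero => exact Nat.le_add_right _ _
  | succ k =>
    have hB : forgetMem {c} ys 1 = {ys 0} := by
      rw [forgetMem, forgetMem, forgetStep_of_lt (singleton_nonempty c) (by simpa using hc)]
      simp
    have hBne : (forgetMem {c} ys 1).Nonempty := hB ▸ singleton_nonempty _
    have hBA : forgetMem {c} ys 1 ⊆ forgetMem T ys 1 :=
      hB ▸ singleton_subset_iff.2 (mem_forgetStep_self _ _)
    have hsdiff : forgetMem T ys 1 \ forgetMem {c} ys 1 ⊆ T := by
      have := forgetStep_subset_insert T (ys 0)
      rw [hB]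
      grind [forgetMem]
    rw [Nat.add_comm k 1, forgetMem_add T, forgetMem_add {c},
      card_filter_eq_add_card_filter_sdiff (forgetMem_mono hBne hBA _ k), add_comm]
    exact Nat.add_le_add_right ((card_filter_forgetMem_sdiff_le hBne hBA _ x k).trans
      (card_le_card (filter_subset_filter _ hsdiff))) _

lemma sCount_add_le (xs : ℕ → ℝ) (x : ℝ) {p : ℕ} (hp : 0 < xs p) (q : ℕ) :
    sCount xs x (p + q) ≤ sCount xs x p + sCount (fun i => xs (p + i)) x q := by
  unfold sCount
  rw [forgetMem_add]
  exact card_filter_forgetMem_le_add _ _ (by simpa using hp) x q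

lemma sCount_le (xs : ℕ → ℝ) (x : ℝ) (n : ℕ) : sCount xs x n ≤ n + 1 :=
  (card_filter_le _ _).trans ((card_forgetMem_le _ xs n).trans (by simp [add_comm]))

end Deterministic

section Measurability

lemma forgetStep_eq_insert_filter {S : Finset ℝ} (hS : S.Nonempty) (y : ℝ) :
    forgetStep S y = insert y {t ∈ S | t ≠ y ∧ ¬(S.min' hS < y ∧ t = S.min' hS)} := by
  unfold forgetStep
  rw [dif_pos hS]
  split_ifs <;> grind

lemma mminProc_eq_min' (xs : ℕ → ℝ) (n : ℕ) :
    mminProc xs n = (forgetMem {0} xs n).min' (forgetMem_nonempty (singleton_nonempty 0) xs n) := by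
  rw [mminProc, ← coe_min' (forgetMem_nonempty (singleton_nonempty 0) xs n)]
  rfl

lemma measurable_sum_forgetMem (n : ℕ) {F : (ℕ → ℝ) → ℝ → ℝ}
    (hF : Measurable (Function.uncurry F)) :
    Measurable fun v => ∑ t ∈ forgetMem {0} v n, F v t := by
  induction n generalizing F with
  | zero =>
    simp only [forgetMem, sum_singleton]
    exact hF.comp (measurable_id.prodMk measurable_const)
  | succ n ih =>
    have hmin : Measurable fun v => mminProc v n := by
      refine measurable_of_Iic fun c => ?_
      have hset : (fun v => mminProc v n) ⁻¹' Set.Iic c =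
          {v | (0 : ℝ) < ∑ t ∈ forgetMem {0} v n, if t ≤ c then 1 else 0} := by
        ext v
        simp only [Set.mem_preimage, Set.mem_Iic, Set.mem_ofPred_eq, sum_boole, Nat.cast_pos,
          card_pos, filter_nonempty_iff, mminProc_eq_min', ← not_lt, lt_min'_iff]
        push Not
        rfl
      rw [hset]
      exact measurableSet_lt measurable_const (ih (Measurable.ite
        (measurableSet_le measurable_snd measurable_const) measurable_const measurable_const))
    have hstep : ∀ v : ℕ → ℝ, ∑ t ∈ forgetMem {0} v (n + 1), F v t = F v (v n) +
        ∑ t ∈ forgetMem {0} v n,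
          if t ≠ v n ∧ ¬(mminProc v n < v n ∧ t = mminProc v n) then F v t else 0 := by
      intro v
      rw [forgetMem, forgetStep_eq_insert_filter (forgetMem_nonempty (singleton_nonempty 0) v n),
        sum_insert (by simp), sum_filter, mminProc_eq_min']
    simp only [hstep]
    refine (hF.comp (measurable_id.prodMk (measurable_pi_apply n))).add (ih ?_)
    refine Measurable.ite ?_ hF measurable_const
    measurability

lemma measurable_sCount (x : ℝ) (n : ℕ) : Measurable fun v => (sCount v x n : ℝ) := by
  simp only [sCount, ← sum_boole]
  exact measurable_sum_forgetMem n (Measurable.ite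
    (measurableSet_le measurable_snd measurable_const) measurable_const measurable_const)

end Measurability

section Probability

variable {Ω : Type*} [MeasurableSpace Ω] {μ : Measure Ω} {X : ℕ → Ω → ℝ}

lemma IsUnifIID.shift (hX : IsUnifIID μ X) (p : ℕ) : IsUnifIID μ fun i => X (p + i) :=
  ⟨fun i => hX.1 (p + i), hX.2.1.precomp (add_right_injective p), fun i => hX.2.2 (p + i)⟩

lemma IsUnifIID.map_eq_infinitePi (hX : IsUnifIID μ X) :
    μ.map (fun ω i => X i ω) = Measure.infinitePi fun _ => volume.restrict (Set.Icc (0 : ℝ) 1) := by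
  rw [hX.2.1.map_fun_eq_infinitePi_map hX.1]
  simp only [hX.2.2]

lemma IsUnifIID.integral_comp_shift (hX : IsUnifIID μ X) {g : (ℕ → ℝ) → ℝ} (hg : Measurable g)
    (p : ℕ) : ∫ ω, g (fun i => X (p + i) ω) ∂μ = ∫ ω, g (fun i => X i ω) ∂μ := by
  rw [← integral_map (measurable_pi_lambda _ (hX.shift p).1).aemeasurable hg.aestronglyMeasurable,
    ← integral_map (measurable_pi_lambda _ hX.1).aemeasurable hg.aestronglyMeasurable,
    (hX.shift p).map_eq_infinitePi, hX.map_eq_infinitePi]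

lemma IsUnifIID.ae_pos (hX : IsUnifIID μ X) (i : ℕ) : ∀ᵐ ω ∂μ, 0 < X i ω := by
  have h : ∀ᵐ t ∂volume.restrict (Set.Icc (0 : ℝ) 1), 0 < t := by
    filter_upwards [ae_restrict_mem measurableSet_Icc,
      ae_restrict_of_ae (Measure.ae_ne volume 0)] with t ht ht0
    exact lt_of_le_of_ne ht.1 ht0.symm
  rw [← hX.2.2 i] at h
  exact ae_of_ae_map (hX.1 i).aemeasurable h

lemma integrable_sCount [IsFiniteMeasure μ] (hX : ∀ i, Measurable (X i)) (x : ℝ) (n : ℕ) :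
    Integrable (fun ω => (sCount (fun i => X i ω) x n : ℝ)) μ := by
  refine .of_bound ((measurable_sCount x n).comp (measurable_pi_lambda _ hX)).aestronglyMeasurable
    (n + 1) (.of_forall fun ω => ?_)
  rw [Real.norm_natCast]
  exact_mod_cast sCount_le _ x n

end Probability

theorem expected_count_subadditive_general {Ω : Type*} [MeasurableSpace Ω] (μ : Measure Ω)
    [IsProbabilityMeasure μ] (X : ℕ → Ω → ℝ) (hX : IsUnifIID μ X)
    (x : ℝ) (p q : ℕ) :
    ∫ ω, (sCount (fun i => X i ω) x (p + q) : ℝ) ∂μ ≤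
      (∫ ω, (sCount (fun i => X i ω) x p : ℝ) ∂μ) +
        ∫ ω, (sCount (fun i => X i ω) x q : ℝ) ∂μ := by
  have hp := integrable_sCount (μ := μ) hX.1 x p
  have hq := integrable_sCount (μ := μ) (hX.shift p).1 x q
  calc ∫ ω, (sCount (fun i => X i ω) x (p + q) : ℝ) ∂μ
      ≤ ∫ ω, ((sCount (fun i => X i ω) x p : ℝ) + sCount (fun i => X (p + i) ω) x q) ∂μ := by
        refine integral_mono_ae (integrable_sCount (μ := μ) hX.1 x (p + q)) (hp.add hq) ?_
        filter_upwards [hX.ae_pos p] with ω hω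
        exact_mod_cast sCount_add_le _ x hω q
    _ = (∫ ω, (sCount (fun i => X i ω) x p : ℝ) ∂μ) +
          ∫ ω, (sCount (fun i => X (p + i) ω) x q : ℝ) ∂μ := integral_add hp hq
    _ = _ := by rw [hX.integral_comp_shift (measurable_sCount x q) p]

/-- For every threshold `x ∈ [0,1]`, the expected count of memory elements
in `[0,x]` is subadditive in time: `E[s(x,p+q)] ≤ E[s(x,p)] + E[s(x,q)]`. -/
theorem expected_count_subadditive {Ω : Type*} [MeasurableSpace Ω] (μ : Measure Ω)
    [IsProbabilityMeasure μ] (X : ℕ → Ω → ℝ) (hX : IsUnifIID μ X)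
    (x : ℝ) (hx : x ∈ Set.Icc (0 : ℝ) 1) (p q : ℕ) :
    ∫ ω, (sCount (fun i => X i ω) x (p + q) : ℝ) ∂μ ≤
      (∫ ω, (sCount (fun i => X i ω) x p : ℝ) ∂μ) +
        ∫ ω, (sCount (fun i => X i ω) x q : ℝ) ∂μ :=
  expected_count_subadditive_general μ X hX x p q
end

section
/- The random variable s(x,ℓ) is 2-Lipschitz as a function of the input sequence: changing the value of a single input point x_i can change the value of s(x,ℓ) by at most 2. -/
open MeasureTheory ProbabilityTheory Finset

/-!
The memories of two runs whose inputs differ only at time `i` never differ by more than two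
points on either side. Before time `i` they coincide; the step at time `i` inserts different
points and can remove the minimum from one memory but not the other, so each side gains at
most two private points. Afterwards, a common step never increases the number of points of
`S` missing from `T`: the new point lies in both, and the only way a shared point `y` can
become private to `S` is that `y` is the minimum of `T` but not of `S`, in which case the
minimum of `S` is a private point of `S` that gets removed at the same step. Hence the
counts of memory points in `[0, x]` differ by at most two.
-/

lemma Finset.card_filter_sub_card_filter_le_card_sdiff {α : Type*} [DecidableEq α]
    (S T : Finset α) (p : α → Prop) [DecidablePred p] :
    (#(S.filter p) : ℤ) - #(T.filter p) ≤ #(S \ T) := by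
  have hsub : S.filter p \ T.filter p ⊆ S \ T := fun y hy => by
    simp only [mem_sdiff, mem_filter] at hy ⊢
    tauto
  have := card_le_card_sdiff_add_card (s := S.filter p) (t := T.filter p)
  have := card_le_card hsub
  omega

lemma mem_forgetStep {S : Finset ℝ} {x y : ℝ} :
    y ∈ forgetStep S x ↔ y = x ∨ y ∈ S ∧ ¬(y < x ∧ ∀ z ∈ S, y ≤ z) := by
  unfold forgetStep
  split_ifs with hS hlt
  · have hmin : ∀ w ∈ S, (∀ z ∈ S, w ≤ z) ↔ w = S.min' hS := fun w hw =>
      ⟨fun h => le_antisymm (h _ (S.min'_mem hS)) (S.min'_le w hw),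
        fun h z hz => h ▸ S.min'_le z hz⟩
    simp only [mem_insert, mem_erase]
    constructor
    · rintro (rfl | ⟨hne, hyS⟩)
      · exact .inl rfl
      · exact .inr ⟨hyS, fun h => hne ((hmin y hyS).1 h.2)⟩
    · rintro (rfl | ⟨hyS, hkeep⟩)
      · exact .inl rfl
      · exact .inr ⟨fun hy => hkeep ⟨hy ▸ hlt, (hmin y hyS).2 hy⟩, hyS⟩
  · simp only [mem_insert]
    refine or_congr_right ⟨fun hyS => ⟨hyS, fun h => hlt ?_⟩, And.left⟩
    exact (S.min'_le y hyS).trans_lt h.1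
  · simp only [mem_insert]
    exact or_congr_right ⟨fun hyS => (hS ⟨y, hyS⟩).elim, And.left⟩

lemma card_forgetStep_sdiff_forgetStep_le_card_sdiff (S T : Finset ℝ) (x : ℝ) :
    #(forgetStep S x \ forgetStep T x) ≤ #(S \ T) := by
  by_cases hsub : forgetStep S x \ forgetStep T x ⊆ S \ T
  · exact card_le_card hsub
  obtain ⟨y, hy, hyST⟩ := not_subset.1 hsub
  simp only [mem_sdiff, mem_forgetStep, not_or, not_and_not_right] at hy hyST
  obtain ⟨rfl | ⟨hyS, hyS_kept⟩, hy_ne_x, hyT_removed⟩ := hy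
  · exact absurd rfl hy_ne_x
  obtain ⟨hyx, hyT_min⟩ := hyT_removed (hyST hyS)
  set m := S.min' ⟨y, hyS⟩
  have hmy : m < y := by
    refine (S.min'_le y hyS).lt_of_ne fun hmy => hyS_kept ⟨hyx, fun z hz => ?_⟩
    exact hmy ▸ S.min'_le z hz
  have hmST : m ∈ S \ T :=
    mem_sdiff.2 ⟨S.min'_mem _, fun hmT => (hyT_min m hmT).not_gt hmy⟩
  have hsub' : forgetStep S x \ forgetStep T x ⊆ insert y ((S \ T).erase m) := by
    intro w hw
    simp only [mem_sdiff, mem_forgetStep, not_or, not_and_not_right] at hw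
    obtain ⟨rfl | ⟨hwS, hwS_kept⟩, hw_ne_x, hwT_removed⟩ := hw
    · exact absurd rfl hw_ne_x
    have hwm : w ≠ m := by
      rintro rfl
      exact hwS_kept ⟨hmy.trans hyx, fun z hz => S.min'_le z hz⟩
    by_cases hwT : w ∈ T
    · exact mem_insert.2 (.inl (((hwT_removed hwT).2 y (hyST hyS)).antisymm (hyT_min w hwT)))
    · exact mem_insert_of_mem (mem_erase.2 ⟨hwm, mem_sdiff.2 ⟨hwS, hwT⟩⟩)
  calc #(forgetStep S x \ forgetStep T x) ≤ #(insert y ((S \ T).erase m)) := card_le_card hsub'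
    _ ≤ #((S \ T).erase m) + 1 := card_insert_le _ _
    _ = #(S \ T) := by rw [card_erase_of_mem hmST]; have := card_pos.2 ⟨m, hmST⟩; omega

lemma card_forgetStep_sdiff_forgetStep_le_two (S : Finset ℝ) (x x' : ℝ) :
    #(forgetStep S x \ forgetStep S x') ≤ 2 := by
  have hsub : forgetStep S x \ forgetStep S x' ⊆ insert x {w ∈ S | ∀ z ∈ S, w ≤ z} := by
    intro w hw
    simp only [mem_sdiff, mem_forgetStep, not_or, not_and] at hw
    simp only [mem_insert, mem_filter]
    rcases hw with ⟨rfl | ⟨hwS, -⟩, -, hrem⟩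
    · exact .inl rfl
    · exact .inr ⟨hwS, by_contra fun h => hrem hwS fun _ => h⟩
  have hmin : #{w ∈ S | ∀ z ∈ S, w ≤ z} ≤ 1 := card_le_one.2 fun a ha b hb => by
    simp only [mem_filter] at ha hb
    exact le_antisymm (ha.2 b hb.1) (hb.2 a ha.1)
  calc #(forgetStep S x \ forgetStep S x') ≤ #(insert x {w ∈ S | ∀ z ∈ S, w ≤ z}) :=
        card_le_card hsub
    _ ≤ #{w ∈ S | ∀ z ∈ S, w ≤ z} + 1 := card_insert_le _ _
    _ ≤ 2 := by omega

lemma forgetMem_congr (T : Finset ℝ) {xs ys : ℕ → ℝ} {n : ℕ}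
    (h : ∀ k < n, xs k = ys k) :
    forgetMem T xs n = forgetMem T ys n := by
  induction n with
  | zero => rfl
  | succ n ih =>
    simp only [forgetMem]
    rw [ih fun k hk => h k (hk.trans n.lt_succ_self), h n n.lt_succ_self]

lemma card_forgetMem_sdiff_le_two (T : Finset ℝ) {xs ys : ℕ → ℝ} {i : ℕ}
    (hdiff : ∀ j, j ≠ i → xs j = ys j) (n : ℕ) :
    #(forgetMem T xs n \ forgetMem T ys n) ≤ 2 := by
  induction n with
  | zero => simp [forgetMem]
  | succ n ih =>
    simp only [forgetMem]
    obtain rfl | hn := eq_or_ne n i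
    · rw [forgetMem_congr T fun k hk => hdiff k hk.ne]
      exact card_forgetStep_sdiff_forgetStep_le_two _ _ _
    · rw [hdiff n hn]
      exact (card_forgetStep_sdiff_forgetStep_le_card_sdiff _ _ _).trans ih

theorem sCount_two_lipschitz_general (x : ℝ) (ℓ i : ℕ) (xs ys : ℕ → ℝ)
    (hdiff : ∀ j, j ≠ i → xs j = ys j) :
    |(sCount xs x ℓ : ℤ) - (sCount ys x ℓ : ℤ)| ≤ 2 := by
  have hxy := card_forgetMem_sdiff_le_two {0} hdiff ℓ
  have hyx := card_forgetMem_sdiff_le_two {0} (fun j hj => (hdiff j hj).symm) ℓ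
  have hcount_xy := (forgetMem {0} xs ℓ).card_filter_sub_card_filter_le_card_sdiff
    (forgetMem {0} ys ℓ) (· ≤ x)
  have hcount_yx := (forgetMem {0} ys ℓ).card_filter_sub_card_filter_le_card_sdiff
    (forgetMem {0} xs ℓ) (· ≤ x)
  unfold sCount
  exact abs_sub_le_iff.2 ⟨by omega, by omega⟩

/-- The random variable `s(x,ℓ)` is a `2`-Lipschitz function of the input
sequence: changing the value of a single input point changes `s(x,ℓ)` by at most `2`. -/
theorem sCount_two_lipschitz (x : ℝ) (ℓ i : ℕ) (xs ys : ℕ → ℝ)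
    (hxs : ∀ k, xs k ∈ Set.Icc (0 : ℝ) 1) (hys : ∀ k, ys k ∈ Set.Icc (0 : ℝ) 1)
    (hdiff : ∀ j, j ≠ i → xs j = ys j) :
    |(sCount xs x ℓ : ℤ) - (sCount ys x ℓ : ℤ)| ≤ 2 :=
  sCount_two_lipschitz_general x ℓ i xs ys hdiff
end
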